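/- arXiv:2605.04990 — 2 statements merged into one kernel-verified Lean document; each statement's English description precedes it below -/
import Mathlib

section
/- Let b ≥ 0 and ℓ ≥ 2 with a - b(b-1)/2 ≡ ℓ (mod 2). If a > b(b-1)/2 + 2b(ℓ-2) + (ℓ-2)² or a < b(b-1)/2 - (ℓ-2)², then every representation of (a, b)^T in base M = [[1,1],[0,1]] over digits {p, m} contains at least ℓ occurrences of the digit m. -/
/-- The Jordan block `[[1,1],[0,1]]`. -/
def M1 : Matrix (Fin 2) (Fin 2) ℤ := !![1, 1; 0, 1]

/-- The digit `p = (0,1)ᵀ`. -/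
def pd : Fin 2 → ℤ := ![0, 1]

/-- The digit `m = (0,-1)ᵀ`. -/
def md : Fin 2 → ℤ := ![0, -1]

/-- The vector represented by the word `d_{k-1} … d_0`, namely `∑ M^i d_i`. -/
def val1 {k : ℕ} (d : Fin k → (Fin 2 → ℤ)) : Fin 2 → ℤ :=
  ∑ i : Fin k, (M1 ^ (i : ℕ)).mulVec (d i)

lemma M1_pow (n : ℕ) : M1 ^ n = !![1, (n:ℤ); 0, 1] := by
  induction n with
  | zero => simp [Matrix.one_fin_two]
  | succ n ih =>
    rw [pow_succ, ih, M1, Matrix.mul_fin_two]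
    push_cast
    norm_num [add_comm]

lemma mv_pd (n : ℕ) : (M1 ^ n).mulVec pd = ![(n:ℤ), 1] := by
  rw [M1_pow]; funext j
  fin_cases j <;> simp [Matrix.mulVec, dotProduct, pd, Fin.sum_univ_two]

lemma mv_md (n : ℕ) : (M1 ^ n).mulVec md = ![-(n:ℤ), -1] := by
  rw [M1_pow]; funext j
  fin_cases j <;> simp [Matrix.mulVec, dotProduct, md, Fin.sum_univ_two]

lemma fin_le_sm {t : ℕ} (f : Fin t → ℕ) (hf : StrictMono f) : ∀ n (j : Fin t), j.val = n → n ≤ f j := by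
  intro n
  induction n with
  | zero => intro j _; exact Nat.zero_le _
  | succ n ih =>
    intro j hj
    have hn : n < t := by omega
    have h1 := hf (show (⟨n, hn⟩ : Fin t) < j by simp [Fin.lt_def, hj])
    have h2 := ih ⟨n, hn⟩ rfl
    omega

lemma gauss (n : ℕ) : 2 * ∑ i ∈ Finset.range n, (i:ℤ) = (n:ℤ) * ((n:ℤ) - 1) := by
  induction n with
  | zero => simp
  | succ n ih => rw [Finset.sum_range_succ]; push_cast; push_cast at ih; linarith

lemma sum_lb (S : Finset ℕ) : (S.card : ℤ) * ((S.card : ℤ) - 1) ≤ 2 * ∑ i ∈ S, (i:ℤ) := by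
  have hf := (S.orderEmbOfFin rfl).strictMono
  have himg : S = Finset.image (S.orderEmbOfFin rfl) Finset.univ := by
    ext x
    simp only [Finset.mem_image, Finset.mem_univ, true_and]
    constructor
    · intro hx
      have : x ∈ Set.range (S.orderEmbOfFin rfl) := by
        rw [Finset.range_orderEmbOfFin]; exact hx
      obtain ⟨j, hj⟩ := this; exact ⟨j, hj⟩
    · rintro ⟨j, rfl⟩
      exact Finset.orderEmbOfFin_mem S rfl j
  have hsum : ∑ i ∈ S, (i:ℤ) = ∑ j : Fin S.card, ((S.orderEmbOfFin rfl j : ℕ) : ℤ) := by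
    conv_lhs => rw [himg]
    rw [Finset.sum_image (fun a _ b _ hab => hf.injective hab)]
  rw [hsum]
  have h1 : ∑ j : Fin S.card, ((j : ℕ) : ℤ) ≤ ∑ j : Fin S.card, ((S.orderEmbOfFin rfl j : ℕ) : ℤ) :=
    Finset.sum_le_sum fun j _ => by exact_mod_cast fin_le_sm _ hf j.val j rfl
  have h2 : 2 * ∑ j : Fin S.card, ((j : ℕ) : ℤ) = (S.card : ℤ) * ((S.card : ℤ) - 1) := by
    rw [Fin.sum_univ_eq_sum_range]; exact gauss _
  linarith

lemma sum_lb' {k : ℕ} (T : Finset (Fin k)) :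
    (T.card : ℤ) * ((T.card : ℤ) - 1) ≤ 2 * ∑ i ∈ T, ((i : ℕ) : ℤ) := by
  have := sum_lb (T.image Fin.val)
  rwa [Finset.card_image_of_injective _ Fin.val_injective,
    Finset.sum_image (fun a _ b _ hab => Fin.val_injective hab)] at this

theorem stmt5 (b ℓ : ℕ) (hℓ : 2 ≤ ℓ) (a : ℤ)
    (hpar : (a - (b : ℤ) * ((b : ℤ) - 1) / 2) % 2 = (ℓ : ℤ) % 2)
    (hout : a > (b : ℤ) * ((b : ℤ) - 1) / 2 + 2 * (b : ℤ) * ((ℓ : ℤ) - 2) + ((ℓ : ℤ) - 2) ^ 2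
          ∨ a < (b : ℤ) * ((b : ℤ) - 1) / 2 - ((ℓ : ℤ) - 2) ^ 2)
    {k : ℕ} (d : Fin k → (Fin 2 → ℤ)) (hd : ∀ i, d i = pd ∨ d i = md)
    (h : val1 d = ![a, (b : ℤ)]) :
    ℓ ≤ (Finset.univ.filter (fun i : Fin k => d i = md)).card := by
  set Q : ℤ := (b : ℤ) * ((b : ℤ) - 1) / 2 with hQdef
  set T := Finset.univ.filter (fun i : Fin k => d i = md) with hTdef
  set Tc := Finset.univ.filter (fun i : Fin k => ¬ d i = md) with hTcdef
  by_contra hcon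
  push_neg at hcon
  -- component equations
  have h0 : ∑ i : Fin k, ((M1 ^ (i:ℕ)).mulVec (d i)) 0 = a := by
    have := congrFun h 0
    simpa [val1, Finset.sum_apply] using this
  have h1 : ∑ i : Fin k, ((M1 ^ (i:ℕ)).mulVec (d i)) 1 = (b : ℤ) := by
    have := congrFun h 1
    simpa [val1, Finset.sum_apply] using this
  set Sm : ℤ := ∑ i ∈ T, ((i : ℕ) : ℤ) with hSmdef
  set Sc : ℤ := ∑ i ∈ Tc, ((i : ℕ) : ℤ) with hScdef
  -- values of terms
  have e0T : ∀ i ∈ T, ((M1 ^ (i:ℕ)).mulVec (d i)) 0 = -((i:ℕ):ℤ) := by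
    intro i hi
    rw [hTdef, Finset.mem_filter] at hi
    rw [hi.2, mv_md]; simp
  have e0C : ∀ i ∈ Tc, ((M1 ^ (i:ℕ)).mulVec (d i)) 0 = ((i:ℕ):ℤ) := by
    intro i hi
    rw [hTcdef, Finset.mem_filter] at hi
    rcases hd i with h' | h'
    · rw [h', mv_pd]; simp
    · exact absurd h' hi.2
  have e1T : ∀ i ∈ T, ((M1 ^ (i:ℕ)).mulVec (d i)) 1 = -1 := by
    intro i hi
    rw [hTdef, Finset.mem_filter] at hi
    rw [hi.2, mv_md]; simp
  have e1C : ∀ i ∈ Tc, ((M1 ^ (i:ℕ)).mulVec (d i)) 1 = 1 := by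
    intro i hi
    rw [hTcdef, Finset.mem_filter] at hi
    rcases hd i with h' | h'
    · rw [h', mv_pd]; simp
    · exact absurd h' hi.2
  -- split sums
  have hsplit0 : ∑ i ∈ T, ((M1 ^ (i:ℕ)).mulVec (d i)) 0
      + ∑ i ∈ Tc, ((M1 ^ (i:ℕ)).mulVec (d i)) 0
      = ∑ i : Fin k, ((M1 ^ (i:ℕ)).mulVec (d i)) 0 :=
    Finset.sum_filter_add_sum_filter_not _ _ _
  have hsplit1 : ∑ i ∈ T, ((M1 ^ (i:ℕ)).mulVec (d i)) 1
      + ∑ i ∈ Tc, ((M1 ^ (i:ℕ)).mulVec (d i)) 1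
      = ∑ i : Fin k, ((M1 ^ (i:ℕ)).mulVec (d i)) 1 :=
    Finset.sum_filter_add_sum_filter_not _ _ _
  have FA : Sc - Sm = a := by
    rw [Finset.sum_congr rfl e0T, Finset.sum_congr rfl e0C] at hsplit0
    rw [Finset.sum_neg_distrib] at hsplit0
    rw [hSmdef, hScdef]; linarith [h0, hsplit0]
  have FB : (Tc.card : ℤ) - (T.card : ℤ) = (b : ℤ) := by
    rw [Finset.sum_congr rfl e1T, Finset.sum_congr rfl e1C] at hsplit1
    simp only [Finset.sum_const, nsmul_eq_mul, mul_one, mul_neg_one] at hsplit1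
    linarith [h1, hsplit1]
  have hck : (T.card : ℤ) + (Tc.card : ℤ) = (k : ℤ) := by
    have : T.card + Tc.card = k := by
      rw [hTdef, hTcdef, Finset.card_filter_add_card_filter_not]
      simp
    exact_mod_cast this
  have htot : Sm + Sc = ∑ i : Fin k, ((i : ℕ) : ℤ) :=
    Finset.sum_filter_add_sum_filter_not _ _ _
  have hK : 2 * (Sm + Sc) = (k:ℤ) * ((k:ℤ) - 1) := by
    rw [htot, Fin.sum_univ_eq_sum_range]; exact gauss k
  have hbm : (T.card : ℤ) * ((T.card : ℤ) - 1) ≤ 2 * Sm := sum_lb' T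
  have hcm : (Tc.card : ℤ) * ((Tc.card : ℤ) - 1) ≤ 2 * Sc := sum_lb' Tc
  have hQ2 : Q * 2 = (b:ℤ) * ((b:ℤ) - 1) := by
    rw [hQdef]
    refine Int.ediv_mul_cancel ?_
    have : Even (((b:ℤ) - 1) * ((b:ℤ) - 1 + 1)) := Int.even_mul_succ_self _
    have h2 : ((b:ℤ) - 1) * ((b:ℤ) - 1 + 1) = (b:ℤ) * ((b:ℤ) - 1) := by ring
    rw [h2] at this
    exact this.two_dvd
  -- abbreviations
  set t : ℤ := (T.card : ℤ) with htdef
  set c : ℤ := (Tc.card : ℤ) with hcdef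
  set B : ℤ := (b : ℤ) with hBdef
  set L : ℤ := (ℓ : ℤ) with hLdef
  set K : ℤ := (k : ℤ) with hKdef
  have hB' : B = K - 2 * t := by linarith
  have hc' : c = B + t := by linarith
  have hK' : K = B + 2 * t := by linarith
  have hSc : 2 * Sm + 2 * Sc = K * (K - 1) := by linarith
  have h2a : 2 * a = K * (K - 1) - 4 * Sm := by linarith
  have hKK : K * (K - 1) = (B + 2 * t) * ((B + 2 * t) - 1) := by rw [hK']
  have hcc : c * (c - 1) = (B + t) * ((B + t) - 1) := by rw [hc']
  -- parity
  have hdd : 2 * (a - Q) = 2 * (2 * (t * K - t * t - Sm) - t) := by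
    linear_combination h2a - hQ2 + hKK + 4*t*hB'
  obtain ⟨m, hm⟩ : ∃ m : ℤ, a - Q = 2 * m - t :=
    ⟨t * K - t * t - Sm, by linarith⟩
  have htL : t < L := by simp only [htdef, hLdef]; exact_mod_cast hcon
  have htL2 : t ≤ L - 2 := by omega
  have ht0 : 0 ≤ t := htdef ▸ Int.natCast_nonneg _
  have hB0 : 0 ≤ B := hBdef ▸ Int.natCast_nonneg _
  have hL2 : (0:ℤ) ≤ L - 2 - t := by linarith
  have hL3 : (0:ℤ) ≤ L - 2 + t := by linarith
  clear_value Q T Tc Sm Sc t c B L K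
  clear h hd h0 h1 e0T e0C e1T e1C hsplit0 hsplit1 htot hTdef hTcdef hSmdef hScdef d
  rcases hout with hout1 | hout2
  · have hub : 2 * a ≤ 2 * Q + 4 * t * B + 2 * t ^ 2 := by linarith [h2a, hbm, hKK, hQ2]
    have P1 : 0 ≤ (L - 2 - t) * B := mul_nonneg hL2 hB0
    have P2 : 0 ≤ (L - 2 - t) * (L - 2 + t) := mul_nonneg hL2 hL3
    linarith [hub, hout1, P1, P2]
  · have hlb2 : 2 * Q - 2 * t ^ 2 ≤ 2 * a := by linarith [hcm, hcc, hSc, h2a, hKK, hQ2]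
    have P2 : 0 ≤ (L - 2 - t) * (L - 2 + t) := mul_nonneg hL2 hL3
    linarith [hlb2, hout2, P2]
end

section
/- For all a, b ∈ Z, the weight wt(a,b) = |b| if and only if one of the following holds: (1) a = b = 0; (2) b > 0, a is even, and a ≤ -b(b-1); (3) b < 0, a + b is even, and a ≥ b². -/
/-- The Jordan block `[[-1,1],[0,-1]]`. -/
def M2 : Matrix (Fin 2) (Fin 2) ℤ := !![-1, 1; 0, -1]

/-- The zero digit `z = (0,0)ᵀ`. -/
def zd : Fin 2 → ℤ := ![0, 0]

/-- The vector represented by the word `d_{k-1} … d_0`, namely `∑ M^i d_i`. -/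
def val2 {k : ℕ} (d : Fin k → (Fin 2 → ℤ)) : Fin 2 → ℤ :=
  ∑ i : Fin k, (M2 ^ (i : ℕ)).mulVec (d i)

/-- The set of weights (numbers of nonzero digits) of representations of `(a,b)ᵀ`
in base `M2` with digits `{p, z}`. -/
def RepWeights (a b : ℤ) : Set ℕ :=
  {w : ℕ | ∃ (k : ℕ) (d : Fin k → (Fin 2 → ℤ)),
    (∀ i, d i = pd ∨ d i = zd) ∧ val2 d = ![a, b] ∧
    (Finset.univ.filter (fun i : Fin k => d i = pd)).card = w}

/-! Representations of `(a, b)` correspond to finite sets `S ⊆ ℕ` (the positions of the digit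
`p`), and since `M ^ i * p = ((-1) ^ (i + 1) * i, (-1) ^ i)` we get `b = ∑ i ∈ S, (-1) ^ i` and
`a = ∑ i ∈ S, (-1) ^ (i + 1) * i`. Hence `#S ≥ |b|`, with equality exactly when all positions are
even (if `b > 0`, and then `a = -∑ S`) or all odd (if `b < 0`, and then `a = ∑ S`). Writing the
positions as `2 t + r`, it remains to know which integers are sums of `n` distinct naturals: exactly
those `s` with `n (n - 1) ≤ 2 s`. -/

open Finset Matrix

lemma M2_pow (n : ℕ) : M2 ^ n = !![(-1 : ℤ) ^ n, (-1) ^ (n + 1) * n; 0, (-1) ^ n] := by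
  induction n with
  | zero => simp [Matrix.one_fin_two]
  | succ n ih =>
    rw [pow_succ, ih, M2, Matrix.mul_fin_two]
    ext i j
    fin_cases i <;> fin_cases j <;> simp <;> ring

lemma M2_pow_mulVec_pd (n : ℕ) : M2 ^ n *ᵥ pd = ![(-1 : ℤ) ^ (n + 1) * n, (-1) ^ n] := by
  ext i; fin_cases i <;> simp [M2_pow, pd]

lemma pd_ne_zd : pd ≠ zd := by
  simp [pd, zd]

lemma zd_eq_zero : zd = 0 := by
  ext i; fin_cases i <;> rfl

def pdPositions {k : ℕ} (d : Fin k → Fin 2 → ℤ) : Finset ℕ :=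
  (univ.filter (d · = pd)).map Fin.valEmbedding

lemma val2_eq_sum_pdPositions {k : ℕ} {d : Fin k → Fin 2 → ℤ} (hd : ∀ i, d i = pd ∨ d i = zd) :
    val2 d = ∑ i ∈ pdPositions d, M2 ^ i *ᵥ pd := by
  rw [pdPositions, sum_map, sum_filter, val2]
  refine sum_congr rfl fun i _ => ?_
  rcases hd i with h | h
  · simp [h]
  · rw [h, if_neg pd_ne_zd.symm, zd_eq_zero, mulVec_zero]

lemma pdPositions_ite {S : Finset ℕ} {k : ℕ} (hS : S ⊆ range k) :
    pdPositions (fun i : Fin k => if (i : ℕ) ∈ S then pd else zd) = S := by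
  ext n
  simp only [pdPositions, mem_map, mem_filter, mem_univ, true_and, Fin.valEmbedding_apply]
  constructor
  · rintro ⟨i, hi, rfl⟩
    by_contra h
    simp [h, pd_ne_zd.symm] at hi
  · intro hn
    exact ⟨⟨n, mem_range.1 (hS hn)⟩, by simp [hn], rfl⟩

lemma sum_M2_pow_mulVec_pd (S : Finset ℕ) :
    ∑ i ∈ S, M2 ^ i *ᵥ pd = ![∑ i ∈ S, (-1) ^ (i + 1) * (i : ℤ), ∑ i ∈ S, (-1) ^ i] := by
  ext j; fin_cases j <;> simp only [Finset.sum_apply, M2_pow_mulVec_pd] <;> simp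

lemma mem_repWeights_iff {a b : ℤ} {w : ℕ} :
    w ∈ RepWeights a b ↔ ∃ S : Finset ℕ, #S = w ∧
      ∑ i ∈ S, (-1) ^ (i + 1) * (i : ℤ) = a ∧ ∑ i ∈ S, (-1 : ℤ) ^ i = b := by
  have hval (S : Finset ℕ) : ∑ i ∈ S, M2 ^ i *ᵥ pd = ![a, b] ↔
      ∑ i ∈ S, (-1) ^ (i + 1) * (i : ℤ) = a ∧ ∑ i ∈ S, (-1 : ℤ) ^ i = b := by
    rw [sum_M2_pow_mulVec_pd]
    simp [vecCons_inj]
  constructor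
  · rintro ⟨k, d, hd, hd_val, rfl⟩
    exact ⟨pdPositions d, card_map _, (hval _).1 (val2_eq_sum_pdPositions hd ▸ hd_val)⟩
  · rintro ⟨S, rfl, hS⟩
    obtain ⟨k, hk⟩ := S.exists_nat_subset_range
    have hd (i : Fin k) : (if (i : ℕ) ∈ S then pd else zd) = pd ∨
        (if (i : ℕ) ∈ S then pd else zd) = zd := by
      by_cases h : (i : ℕ) ∈ S <;> simp [h]
    refine ⟨k, _, hd, ?_, ?_⟩
    · rw [val2_eq_sum_pdPositions hd, pdPositions_ite hk]
      exact (hval S).2 hS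
    · rw [← card_map Fin.valEmbedding]
      exact congrArg card (pdPositions_ite hk)

lemma two_mul_sum_range_natCast (n : ℕ) : 2 * ∑ i ∈ range n, (i : ℤ) = n * (n - 1) := by
  induction n with
  | zero => simp
  | succ n ih => rw [sum_range_succ, mul_add, ih]; push_cast; ring

lemma card_mul_card_sub_one_le_two_mul_sum (T : Finset ℕ) :
    (#T * (#T - 1) : ℤ) ≤ 2 * ∑ i ∈ T, (i : ℤ) := by
  have h := sum_range_le_sum (s := T.map Nat.castEmbedding) (c := 0) (by simp)
  simp only [card_map, zero_add, sum_map, Nat.castEmbedding_apply] at h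
  linarith [two_mul_sum_range_natCast #T]

lemma exists_card_eq_sum_eq {n : ℕ} {s : ℤ} (hn : n ≠ 0) (h : n * (n - 1) ≤ 2 * s) :
    ∃ T : Finset ℕ, #T = n ∧ ∑ i ∈ T, (i : ℤ) = s := by
  obtain ⟨m, rfl⟩ := Nat.exists_eq_succ_of_ne_zero hn
  set t := s - ∑ i ∈ range m, (i : ℤ)
  have hsum := two_mul_sum_range_natCast m
  push_cast at h
  have ht : (m : ℤ) ≤ t := by nlinarith
  have ht_mem : t.toNat ∉ range m := by simp; omega
  refine ⟨insert t.toNat (range m), by simp [card_insert_of_notMem ht_mem], ?_⟩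
  rw [sum_insert ht_mem, Int.toNat_of_nonneg (by omega)]
  ring

lemma exists_card_sum_of_mod_two_iff {n r : ℕ} {x : ℤ} (hn : n ≠ 0) (hr : r < 2) :
    (∃ S : Finset ℕ, #S = n ∧ (∀ i ∈ S, i % 2 = r) ∧ ∑ i ∈ S, (i : ℤ) = x) ↔
      Even (x - r * n) ∧ n * (n - 1) + r * n ≤ x := by
  constructor
  · rintro ⟨S, rfl, hS, rfl⟩
    have hinj : Set.InjOn (· / 2) (S : Set ℕ) := fun i hi j hj hij => by
      have := hS i hi; have := hS j hj; simp only at hij; omega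
    set T := S.image (fun i : ℕ => i / 2)
    have hsum : ∑ i ∈ S, (i : ℤ) = 2 * ∑ t ∈ T, (t : ℤ) + r * #S := by
      rw [sum_image hinj, mul_sum, mul_comm (r : ℤ), ← nsmul_eq_mul, ← sum_const, ← sum_add_distrib]
      refine sum_congr rfl fun i hi => ?_
      have := hS i hi
      omega
    have hbound := card_mul_card_sub_one_le_two_mul_sum T
    rw [card_image_of_injOn hinj] at hbound
    exact ⟨⟨∑ t ∈ T, (t : ℤ), by rw [hsum]; ring⟩, by linarith⟩
  · rintro ⟨⟨s, hs⟩, hle⟩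
    obtain ⟨T, rfl, hT⟩ := exists_card_eq_sum_eq hn (show n * (n - 1) ≤ 2 * s by linarith)
    have hinj : Function.Injective (fun t => 2 * t + r) := fun i j h => by simp only at h; omega
    refine ⟨T.image (fun t => 2 * t + r), card_image_of_injective _ hinj, by simp; omega, ?_⟩
    rw [sum_image fun i _ j _ h => hinj h]
    push_cast
    rw [sum_add_distrib, ← mul_sum, hT, sum_const, nsmul_eq_mul]
    linarith

lemma abs_sum_neg_one_pow_le_card (S : Finset ℕ) : |∑ i ∈ S, (-1 : ℤ) ^ i| ≤ #S := by
  simpa using abs_sum_le_sum_abs (fun i => (-1 : ℤ) ^ i) S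

lemma sum_neg_one_pow_eq_iff {S : Finset ℕ} {r : ℕ} (hr : r < 2) :
    ∑ i ∈ S, (-1 : ℤ) ^ i = (-1) ^ r * #S ↔ ∀ i ∈ S, i % 2 = r := by
  have hsign : (-1 : ℤ) ^ r * (-1) ^ r = 1 := pow_mul_pow_eq_one r rfl
  calc ∑ i ∈ S, (-1 : ℤ) ^ i = (-1) ^ r * #S
      ↔ ∑ i ∈ S, (-1 : ℤ) ^ (i + r) = ∑ _i ∈ S, 1 := by
        rw [← mul_right_inj' (pow_ne_zero r (neg_ne_zero.2 one_ne_zero)), ← mul_assoc, hsign,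
          mul_sum]
        simp [pow_add, mul_comm]
    _ ↔ ∀ i ∈ S, (-1 : ℤ) ^ (i + r) = 1 :=
        sum_eq_sum_iff_of_le fun i _ => by
          rcases neg_one_pow_eq_or ℤ (i + r) with h | h <;> simp [h]
    _ ↔ ∀ i ∈ S, i % 2 = r := forall₂_congr fun i _ => by
        rw [neg_one_pow_eq_one_iff_even (by decide), Nat.even_iff]
        omega

lemma sum_neg_one_pow_succ_mul_of_mod_two {S : Finset ℕ} {r : ℕ} (hS : ∀ i ∈ S, i % 2 = r) :
    ∑ i ∈ S, (-1) ^ (i + 1) * (i : ℤ) = -(-1) ^ r * ∑ i ∈ S, (i : ℤ) := by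
  rw [mul_sum]
  refine sum_congr rfl fun i hi => ?_
  rw [pow_succ, neg_one_pow_eq_pow_mod_two, hS i hi]
  ring

lemma natCast_mem_repWeights_iff_of_mod_two {n r : ℕ} {a : ℤ} (hr : r < 2) :
    n ∈ RepWeights a ((-1) ^ r * n) ↔
      ∃ S : Finset ℕ, #S = n ∧ (∀ i ∈ S, i % 2 = r) ∧ ∑ i ∈ S, (i : ℤ) = -(-1) ^ r * a := by
  have hsign : (-1 : ℤ) ^ r * (-1) ^ r = 1 := pow_mul_pow_eq_one r rfl
  rw [mem_repWeights_iff]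
  refine exists_congr fun S => ⟨?_, ?_⟩
  · rintro ⟨rfl, ha, hb⟩
    have hS := (sum_neg_one_pow_eq_iff hr).1 hb
    refine ⟨rfl, hS, ?_⟩
    rw [← ha, sum_neg_one_pow_succ_mul_of_mod_two hS]
    linear_combination -(∑ i ∈ S, (i : ℤ)) * hsign
  · rintro ⟨rfl, hS, hsum⟩
    refine ⟨rfl, ?_, (sum_neg_one_pow_eq_iff hr).2 hS⟩
    rw [sum_neg_one_pow_succ_mul_of_mod_two hS, hsum]
    linear_combination a * hsign

lemma natCast_mem_repWeights_natCast_iff {n : ℕ} {a : ℤ} (hn : n ≠ 0) :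
    n ∈ RepWeights a n ↔ Even a ∧ a ≤ -(n * (n - 1)) := by
  have h := natCast_mem_repWeights_iff_of_mod_two (n := n) (a := a) (r := 0) (by norm_num)
  rw [pow_zero, one_mul, neg_one_mul] at h
  rw [h, exists_card_sum_of_mod_two_iff hn (by norm_num)]
  simp [le_neg]

lemma natCast_mem_repWeights_neg_natCast_iff {n : ℕ} {a : ℤ} (hn : n ≠ 0) :
    n ∈ RepWeights a (-n) ↔ Even (a - n) ∧ n ^ 2 ≤ a := by
  have h := natCast_mem_repWeights_iff_of_mod_two (n := n) (a := a) (r := 1) (by norm_num)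
  rw [pow_one, neg_one_mul, neg_neg, one_mul] at h
  rw [h, exists_card_sum_of_mod_two_iff hn (by norm_num)]
  simp [sq, mul_sub]

lemma sum_range_two_mul_add_eq (k m : ℕ) :
    ∑ i ∈ range (2 * m), (-1) ^ (i + k + 1) * ((i + k : ℕ) : ℤ) = (-1) ^ k * m ∧
      ∑ i ∈ range (2 * m), (-1 : ℤ) ^ (i + k) = 0 := by
  induction m with
  | zero => simp
  | succ m ih =>
    rw [mul_add, mul_one, sum_range_succ, sum_range_succ, sum_range_succ, sum_range_succ, ih.1,
      ih.2]
    simp only [pow_add, pow_mul, neg_one_sq, one_pow, pow_one]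
    push_cast
    constructor <;> ring

-- Two consecutive positions `{i, i + 1}` contribute `((-1) ^ i, 0)`.
lemma exists_sum_eq_and_sum_neg_one_pow_eq_zero (a : ℤ) :
    ∃ S : Finset ℕ, ∑ i ∈ S, (-1) ^ (i + 1) * (i : ℤ) = a ∧ ∑ i ∈ S, (-1 : ℤ) ^ i = 0 := by
  obtain ⟨k, m, rfl⟩ : ∃ k m : ℕ, a = (-1) ^ k * m := by
    rcases le_or_gt 0 a with ha | ha
    · exact ⟨0, a.toNat, by simp [ha]⟩
    · exact ⟨1, (-a).toNat, by simp; omega⟩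
  refine ⟨(range (2 * m)).map (addRightEmbedding k), ?_⟩
  simpa only [sum_map, addRightEmbedding_apply] using sum_range_two_mul_add_eq k m

lemma natAbs_le_of_mem_repWeights {a b : ℤ} {w : ℕ} (hw : w ∈ RepWeights a b) : b.natAbs ≤ w := by
  obtain ⟨S, rfl, -, rfl⟩ := mem_repWeights_iff.1 hw
  have := abs_sum_neg_one_pow_le_card S
  rw [Int.abs_eq_natAbs] at this
  omega

lemma repWeights_nonempty_of_snd_eq_zero (a : ℤ) : (RepWeights a 0).Nonempty := by
  obtain ⟨S, hS⟩ := exists_sum_eq_and_sum_neg_one_pow_eq_zero a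
  exact ⟨#S, mem_repWeights_iff.2 ⟨S, rfl, hS⟩⟩

lemma sInf_repWeights_eq_natAbs_iff {a b : ℤ} :
    sInf (RepWeights a b) = b.natAbs ↔ b.natAbs ∈ RepWeights a b := by
  refine ⟨fun h => ?_, fun h => le_antisymm (Nat.sInf_le h) (le_csInf ⟨_, h⟩ fun w hw =>
    natAbs_le_of_mem_repWeights hw)⟩
  obtain hempty | hne := (RepWeights a b).eq_empty_or_nonempty
  · rw [hempty, Nat.sInf_empty, eq_comm, Int.natAbs_eq_zero] at h
    subst h
    exact absurd hempty (repWeights_nonempty_of_snd_eq_zero a).ne_empty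
  · exact h ▸ Nat.sInf_mem hne

lemma zero_mem_repWeights_zero_iff {a : ℤ} : 0 ∈ RepWeights a 0 ↔ a = 0 := by
  simp [mem_repWeights_iff, eq_comm]

theorem stmt17 (a b : ℤ) :
    sInf (RepWeights a b) = b.natAbs ↔
      (a = 0 ∧ b = 0) ∨
      (0 < b ∧ Even a ∧ a ≤ -(b * (b - 1))) ∨
      (b < 0 ∧ Even (a + b) ∧ b ^ 2 ≤ a) := by
  rw [sInf_repWeights_eq_natAbs_iff]
  rcases lt_trichotomy b 0 with hb | rfl | hb
  · obtain ⟨n, rfl⟩ : ∃ n : ℕ, b = -n := ⟨b.natAbs, by omega⟩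
    have hn : 0 < n := by omega
    rw [Int.natAbs_neg, Int.natAbs_natCast, natCast_mem_repWeights_neg_natCast_iff hn.ne']
    simp [hn, hn.ne', sub_eq_add_neg]
  · simp [zero_mem_repWeights_zero_iff]
  · lift b to ℕ using hb.le
    have hb : 0 < b := by omega
    rw [Int.natAbs_natCast, natCast_mem_repWeights_natCast_iff hb.ne']
    simp [hb, hb.ne']
end
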